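/- arXiv:1905.04465 — 2 statements merged into one kernel-verified Lean document; each statement's English description precedes it below -/
import Mathlib

section
/- For all natural numbers m, n, k, one has C(m, n, k) = Σ_{i=0}^{n} Σ_{j=0}^{i} binom(n, i) · binom(i, j) · binom(m, k - i + j), where the factor binom(m, k - i + j) is interpreted as 0 whenever i > k + j. -/
/-!
Marking the letter `2` by `X`, a position among the first `m` contributes the factor `X + 1`
(letters `1, 2`) and any other position the factor `X + 2` (letters `0, 1, 2`), so `C m n k` is
the coefficient of `X ^ k` in `(X + 1) ^ m * (X + 2) ^ n`. Expanding
`(X + 2) ^ n = ((1 + X) + 1) ^ n` and then each `(1 + X) ^ i` by the binomial theorem gives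
exactly the double sum: the summand `(i, j)` is `n.choose i * i.choose j * X ^ (i - j) * (X + 1) ^ m`.
-/

open Finset

/-- The set of ternary words of length `m + n` (as functions `Fin (m+n) → Fin 3`)
having exactly `k` letters equal to `2` and no letter equal to `0` among the
first `m` letters. -/
def ternaryWords (m n k : ℕ) : Finset (Fin (m + n) → Fin 3) :=
  univ.filter fun w =>
    (univ.filter fun i => w i = 2).card = k ∧ ∀ i : Fin (m + n), (i : ℕ) < m → w i ≠ 0

/-- `C m n k` is the number of ternary words of length `m + n` with exactly `k`
twos and no zero among the first `m` letters; it equals the inset number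
`{m,n choose k}` of Janjić–Petković. -/
def C (m n k : ℕ) : ℕ := (ternaryWords m n k).card

open Polynomial hiding C

theorem coeff_prod_sum_X_pow_ite_eq_card {ι α : Type*} [Fintype ι] [DecidableEq ι]
    [DecidableEq α] (t : ι → Finset α) (a : α) (k : ℕ) :
    (∏ i, ∑ c ∈ t i, (X : ℕ[X]) ^ (if c = a then 1 else 0)).coeff k =
      #{w ∈ Fintype.piFinset t | #{i | w i = a} = k} := by
  simp_rw [prod_univ_sum, prod_pow_eq_pow_sum, ← card_filter, finsetSum_coeff, coeff_X_pow,
    sum_boole, Nat.cast_id, eq_comm]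

theorem C_eq_coeff (m n k : ℕ) : C m n k = ((X + 1) ^ m * (X + 2) ^ n : ℕ[X]).coeff k := by
  let allowed : Fin (m + n) → Finset (Fin 3) := fun i => {c | (i : ℕ) < m → c ≠ 0}
  have hwords : ternaryWords m n k = {w ∈ Fintype.piFinset allowed | #{i | w i = 2} = k} := by
    ext w
    simp [ternaryWords, allowed, and_comm]
  have hfactor (i : Fin (m + n)) :
      ∑ c ∈ allowed i, (X : ℕ[X]) ^ (if c = 2 then 1 else 0) =
        if (i : ℕ) < m then X + 1 else X + 2 := by
    by_cases hi : (i : ℕ) < m <;> simp [allowed, hi, sum_filter, Fin.sum_univ_three] <;> ring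
  rw [C, hwords, ← coeff_prod_sum_X_pow_ite_eq_card, prod_congr rfl fun i _ => hfactor i,
    Fin.prod_univ_add]
  simp

theorem X_add_two_pow_eq_sum (n : ℕ) : (X + 2 : ℕ[X]) ^ n =
    ∑ i ∈ range (n + 1), ∑ j ∈ range (i + 1), (n.choose i * i.choose j : ℕ[X]) * X ^ (i - j) := by
  rw [show (X + 2 : ℕ[X]) = (1 + X) + 1 by ring, add_pow]
  refine sum_congr rfl fun i _ => ?_
  rw [add_pow, one_pow, mul_one, sum_mul]
  refine sum_congr rfl fun j _ => ?_
  ring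

theorem stmt_13 (m n k : ℕ) :
    C m n k =
      ∑ i ∈ Finset.range (n + 1), ∑ j ∈ Finset.range (i + 1),
        n.choose i * i.choose j * (if i ≤ k + j then m.choose (k + j - i) else 0) := by
  rw [C_eq_coeff, X_add_two_pow_eq_sum, mul_sum, finsetSum_coeff]
  refine sum_congr rfl fun i _ => ?_
  rw [mul_sum, finsetSum_coeff]
  refine sum_congr rfl fun j hj => ?_
  have hji : j ≤ i := Nat.lt_succ_iff.mp (mem_range.mp hj)
  rw [mul_left_comm, ← Nat.cast_mul, ← C_eq_natCast, coeff_C_mul, coeff_mul_X_pow',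
    coeff_X_add_one_pow]
  simp only [Nat.cast_id, Nat.sub_le_iff_le_add, show k - (i - j) = k + j - i by omega]
end

section
/- For every natural number k, one has C(2k, 1, k) = (3k + 2) · Catalan(k), where Catalan(k) is the k-th Catalan number. In other words, (3k+2)·Catalan(k) equals the number of ternary words of length 2k+1 having exactly k letters equal to 2 in which 0 may appear only as the last letter. -/
/-!
Sort the words by their last letter. If it is `0` or `1`, the first `2k` letters form a word
over `{1, 2}` with `k` twos, and there are `binom(2k, k) = (k + 1) Catalan(k)` of those; if it
is `2`, they form such a word with `k - 1` twos, and `binom(2k, k - 1) = k Catalan(k)`.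
Hence `C(2k, 1, k) = (2 (k + 1) + k) Catalan(k)`.
-/

open Finset

theorem mul_catalan_eq_choose_succ (n : ℕ) : n * catalan n = (2 * n).choose (n + 1) := by
  have h := Nat.choose_succ_right_eq (2 * n) n
  rw [show 2 * n - n = n by omega, ← Nat.centralBinom, ← succ_mul_catalan_eq_centralBinom] at h
  apply Nat.eq_of_mul_eq_mul_right (show 0 < n + 1 by omega)
  rw [h]
  ring

lemma Fin.eq_one_of_ne_zero_of_ne_two : ∀ {x : Fin 3}, x ≠ 0 → x ≠ 2 → x = 1 := by decide

theorem C_zero_right (m k : ℕ) : C m 0 k = m.choose k := by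
  rw [C, show m.choose k = #(powersetCard k (univ : Finset (Fin m))) by simp]
  refine card_nbij' (fun w => univ.filter fun i : Fin m => w i = 2)
    (fun s i => if i ∈ s then 2 else 1) ?_ ?_ ?_ ?_
  · intro w hw
    exact mem_powersetCard_univ.2 (mem_filter.1 hw).2.1
  · intro s hs
    have hs : #s = k := mem_powersetCard_univ.1 hs
    refine mem_filter.2 ⟨mem_univ _, ?_, fun i _ => ?_⟩
    · rw [← hs]
      congr 1
      ext i
      by_cases h : i ∈ s <;> simp [h]
    · by_cases h : i ∈ s <;> simp [h]
  · intro w hw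
    funext i
    have hi : w i ≠ 0 := (mem_filter.1 hw).2.2 i i.2
    by_cases h : w i = 2
    · simp [h]
    · simp [Fin.eq_one_of_ne_zero_of_ne_two hi h]
  · intro s _
    ext i
    by_cases h : i ∈ s <;> simp [h]

lemma card_filter_eq_two_eq_init {N : ℕ} (w : Fin (N + 1) → Fin 3) :
    #{i | w i = 2} = #{i | Fin.init w i = 2} + if w (Fin.last N) = 2 then 1 else 0 := by
  rw [card_filter, card_filter, Fin.sum_univ_castSucc]
  rfl

lemma mem_ternaryWords_succ_right_iff {m n j k : ℕ} {w : Fin (m + (n + 1)) → Fin 3}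
    (hk : k = j + if w (Fin.last (m + n)) = 2 then 1 else 0) :
    w ∈ ternaryWords m (n + 1) k ↔ Fin.init w ∈ ternaryWords m n j := by
  simp only [ternaryWords, mem_filter, mem_univ, true_and]
  rw [show #{i | w i = 2} = _ from card_filter_eq_two_eq_init (N := m + n) w, hk,
    Nat.add_right_cancel_iff]
  exact and_congr_right fun _ =>
    ⟨fun h i hi => h i.castSucc hi, fun h i hi => h ⟨i, by omega⟩ hi⟩

lemma card_ternaryWords_filter_last_eq {m n j k : ℕ} (a : Fin 3)
    (hk : k = j + if a = 2 then 1 else 0) :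
    #{w ∈ ternaryWords m (n + 1) k | w (Fin.last (m + n)) = a} = C m n j := by
  refine card_nbij' Fin.init (fun u => Fin.snoc u a) ?_ ?_ ?_ ?_
  · intro w hw
    obtain ⟨hmem, rfl⟩ := mem_filter.1 hw
    exact (mem_ternaryWords_succ_right_iff hk).1 hmem
  · intro u hu
    have hlast : (Fin.snoc u a : Fin (m + n + 1) → Fin 3) (Fin.last (m + n)) = a :=
      Fin.snoc_last (α := fun _ => Fin 3) a u
    refine mem_filter.2 ⟨(mem_ternaryWords_succ_right_iff (hlast ▸ hk)).2 ?_, hlast⟩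
    rwa [Fin.init_snoc]
  · intro w hw
    obtain ⟨-, rfl⟩ := mem_filter.1 hw
    exact Fin.snoc_init_self w
  · intro u _
    exact Fin.init_snoc (α := fun _ => Fin 3) a u

theorem C_succ_right_succ (m n k : ℕ) : C m (n + 1) (k + 1) = 2 * C m n (k + 1) + C m n k := by
  rw [C, card_eq_sum_card_fiberwise (f := fun w => w (Fin.last (m + n))) (t := univ)
      fun _ _ => mem_univ _, Fin.sum_univ_three,
    card_ternaryWords_filter_last_eq (j := k + 1) 0 (by simp),
    card_ternaryWords_filter_last_eq (j := k + 1) 1 (by simp),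
    card_ternaryWords_filter_last_eq (j := k) 2 (by simp)]
  ring

theorem stmt_19 (k : ℕ) :
    C (2 * k) 1 k = (3 * k + 2) * catalan k := by
  cases k with
  | zero =>
    rw [catalan_zero]
    unfold C ternaryWords
    decide
  | succ k =>
    rw [C_succ_right_succ (n := 0), C_zero_right, C_zero_right,
      Nat.choose_symm_of_eq_add (show 2 * (k + 1) = k + (k + 2) by ring),
      ← mul_catalan_eq_choose_succ, ← Nat.centralBinom, ← succ_mul_catalan_eq_centralBinom]
    ring
end
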